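/- arXiv:math/0410221 — 2 statements merged into one kernel-verified Lean document; each statement's English description precedes it below -/
import Mathlib

section
/- Let K be a number field, M a nonzero fractional ideal of K whose class has order n in Cl(K), so that M^n = (a) is principal. Then the O_K-algebra R = O_K ⊕ M ⊕ M^2 ⊕ ⋯ ⊕ M^{n-1}, with multiplication induced by multiplication in K and the identification M^n ≅ O_K via division by a, is a commutative ring that is integral over O_K, and M·R is a principal fractional ideal of R. -/
universe u

open NumberField DirectSum
open scoped nonZeroDivisors

/-- A witness for Theorem 2.3 of the paper: a commutative `O_K`-algebra `R` which, as an
`O_K`-module, is `O_K ⊕ M ⊕ M² ⊕ ⋯ ⊕ M^{n-1}`, whose multiplication is induced by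
multiplication in `K` together with the identification `M^n ≅ O_K` given by division by
the generator `a` of `M^n`, which is integral over `O_K`, and in which the ideal generated
by (the copy of) `M` is principal. -/
structure IntegralModelWitness (K : Type u) [Field K] [NumberField K]
    (M : FractionalIdeal (𝓞 K)⁰ K) (n : ℕ) (hn : 0 < n) (a : K) : Type (u + 1) where
  R : Type u
  [commRing : CommRing R]
  [algebra : Algebra (𝓞 K) R]
  /-- `R` is integral over `O_K`. -/
  integral : Algebra.IsIntegral (𝓞 K) R
  /-- As an `O_K`-module, `R` is `O_K ⊕ M ⊕ M² ⊕ ⋯ ⊕ M^{n-1}`. -/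
  equiv : R ≃ₗ[𝓞 K] ⨁ i : Fin n, ↥((M ^ (i : ℕ) : FractionalIdeal (𝓞 K)⁰ K) : Submodule (𝓞 K) K)
  /-- the multiplication on `R` is induced by multiplication in `K` when no reduction
  modulo the identification `M^n ≅ O_K` is needed … -/
  mul_of_lt : ∀ (i j : Fin n) (x y : K)
      (hx : x ∈ ((M ^ (i : ℕ) : FractionalIdeal (𝓞 K)⁰ K) : Submodule (𝓞 K) K))
      (hy : y ∈ ((M ^ (j : ℕ) : FractionalIdeal (𝓞 K)⁰ K) : Submodule (𝓞 K) K)),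
      (i : ℕ) + (j : ℕ) < n →
      ∀ hxy : x * y ∈ ((M ^ ((i + j : Fin n) : ℕ) : FractionalIdeal (𝓞 K)⁰ K) :
          Submodule (𝓞 K) K),
        equiv.symm (DirectSum.of _ i ⟨x, hx⟩) * equiv.symm (DirectSum.of _ j ⟨y, hy⟩) =
          equiv.symm (DirectSum.of _ (i + j) ⟨x * y, hxy⟩)
  /-- … and is given by multiplication in `K` followed by division by `a` (the
  identification `M^n ≅ O_K`) when the degrees add up to at least `n`. -/
  mul_of_ge : ∀ (i j : Fin n) (x y : K)
      (hx : x ∈ ((M ^ (i : ℕ) : FractionalIdeal (𝓞 K)⁰ K) : Submodule (𝓞 K) K))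
      (hy : y ∈ ((M ^ (j : ℕ) : FractionalIdeal (𝓞 K)⁰ K) : Submodule (𝓞 K) K)),
      n ≤ (i : ℕ) + (j : ℕ) →
      ∀ hxy : x * y / a ∈ ((M ^ ((i + j : Fin n) : ℕ) : FractionalIdeal (𝓞 K)⁰ K) :
          Submodule (𝓞 K) K),
        equiv.symm (DirectSum.of _ i ⟨x, hx⟩) * equiv.symm (DirectSum.of _ j ⟨y, hy⟩) =
          equiv.symm (DirectSum.of _ (i + j) ⟨x * y / a, hxy⟩)
  /-- the ideal of `R` generated by the copy of `M` (the degree-one summand) is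
  principal. -/
  principal : Submodule.IsPrincipal (Submodule.span R
      {r : R | ∃ (x : K) (hx : x ∈ ((M ^ ((1 % n : ℕ)) : FractionalIdeal (𝓞 K)⁰ K) :
          Submodule (𝓞 K) K)),
        r = equiv.symm (DirectSum.of _ (⟨1 % n, Nat.mod_lt 1 hn⟩ : Fin n) ⟨x, hx⟩)})

/-!
Realise `R` inside `K[t]/(tⁿ - a⁻¹)` as the `O_K`-submodule `⊕_{i<n} Mⁱ tⁱ`. Since `tⁿ = a⁻¹`,
`(x tⁱ)(y tʲ) = (x y / a) t^{i+j-n}` once `i + j ≥ n`, so the twisted multiplication of the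
statement is just multiplication in this ring, and `Mⁱ⁺ʲ = a M^{i+j-n}` shows that the submodule is
closed under it. The powers `1, t, …, t^{n-1}` are `K`-linearly independent, which makes the sum
direct; each `Mⁱ` is finitely generated over the Noetherian ring `O_K`, so `R` is module-finite,
hence integral. Finally `a ∈ M · M^{n-1}` writes `1 = Σ (c_k t^{n-1})(m_k t)` with `m_k ∈ M`, so
`M·R = R = (1)`.
-/

open Polynomial

section RadicalAlgebra

variable (K : Type u) [Field K] (n : ℕ) (a : K)

abbrev RadicalAlgebra : Type u := AdjoinRoot (X ^ n - C a⁻¹ : K[X])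

noncomputable abbrev radical : RadicalAlgebra K n a := AdjoinRoot.root _

variable {K n a}

theorem radical_pow_eq (k : ℕ) :
    radical K n a ^ k = algebraMap K _ (a ^ (k / n))⁻¹ * radical K n a ^ (k % n) := by
  conv_lhs => rw [← Nat.div_add_mod k n, pow_add, pow_mul, radical, root_X_pow_sub_C_pow,
    ← AdjoinRoot.algebraMap_eq, ← map_pow, inv_pow]

theorem smul_radical_pow_mul_smul_radical_pow (x y : K) (i j : ℕ) :
    (x • radical K n a ^ i) * (y • radical K n a ^ j) =
      (x * y / a ^ ((i + j) / n)) • radical K n a ^ ((i + j) % n) := by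
  rw [smul_mul_smul_comm, ← pow_add, radical_pow_eq, ← smul_eq_mul, ← Algebra.smul_def,
    smul_smul, div_eq_mul_inv]

theorem linearIndependent_radical_pow (hn : 0 < n) :
    LinearIndependent K fun i : Fin n => radical K n a ^ (i : ℕ) := by
  have h := (AdjoinRoot.powerBasis (X_pow_sub_C_ne_zero hn a⁻¹)).basis.linearIndependent.comp
    (Fin.cast natDegree_X_pow_sub_C.symm) (Fin.cast_injective _)
  rw [PowerBasis.coe_basis, AdjoinRoot.powerBasis_gen] at h
  exact h

end RadicalAlgebra

section GradedModel

variable {A : Type*} [CommRing A] {K : Type u} [Field K] [Algebra A K]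
  (M : FractionalIdeal A⁰ K) {n : ℕ} {a : K}

theorem mul_mem_pow_add {i j : ℕ} {x y : K} (hx : x ∈ (↑(M ^ i) : Submodule A K))
    (hy : y ∈ (↑(M ^ j) : Submodule A K)) : x * y ∈ (↑(M ^ (i + j)) : Submodule A K) := by
  rw [pow_add, FractionalIdeal.coe_mul]
  exact Submodule.mul_mem_mul hx hy

variable (n a)

noncomputable def gradedEmbedding :
    (⨁ i : Fin n, (↑(M ^ (i : ℕ)) : Submodule A K)) →ₗ[A] RadicalAlgebra K n a :=
  DirectSum.toModule A (Fin n) _ fun i =>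
    ((LinearMap.toSpanSingleton K _ (radical K n a ^ (i : ℕ))).restrictScalars A).comp
      (Submodule.subtype _)

variable {n a}

theorem gradedEmbedding_of (i : Fin n) (x : (↑(M ^ (i : ℕ)) : Submodule A K)) :
    gradedEmbedding M n a (of _ i x) = (x : K) • radical K n a ^ (i : ℕ) := by
  rw [gradedEmbedding, ← DirectSum.lof_eq_of A, DirectSum.toModule_lof]
  rfl

theorem gradedEmbedding_injective (hn : 0 < n) : Function.Injective (gradedEmbedding M n a) := by
  intro x y hxy
  rw [← DirectSum.sum_univ_of x, ← DirectSum.sum_univ_of y, map_sum, map_sum] at hxy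
  simp only [gradedEmbedding_of] at hxy
  ext i
  exact Fintype.linearIndependent_iffₛ.1 (linearIndependent_radical_pow hn)
    (fun i => (x i : K)) (fun i => (y i : K)) hxy i

theorem gradedEmbedding_of_mul_of (i j : Fin n) (x : (↑(M ^ (i : ℕ)) : Submodule A K))
    (y : (↑(M ^ (j : ℕ)) : Submodule A K)) (z : (↑(M ^ ((i + j : Fin n) : ℕ)) : Submodule A K))
    (hz : (z : K) = x * y / a ^ ((i + j : ℕ) / n)) :
    gradedEmbedding M n a (of _ i x) * gradedEmbedding M n a (of _ j y) =
      gradedEmbedding M n a (of _ (i + j) z) := by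
  rw [gradedEmbedding_of, gradedEmbedding_of, gradedEmbedding_of,
    smul_radical_pow_mul_smul_radical_pow, hz, Fin.val_add]

theorem gradedEmbedding_of_mul_of_of_add_eq {i j : Fin n} (hij : (i : ℕ) + j = n)
    (x : (↑(M ^ (i : ℕ)) : Submodule A K)) (y : (↑(M ^ (j : ℕ)) : Submodule A K)) :
    gradedEmbedding M n a (of _ i x) * gradedEmbedding M n a (of _ j y) =
      ((x : K) * y) • algebraMap K (RadicalAlgebra K n a) a⁻¹ := by
  rw [gradedEmbedding_of, gradedEmbedding_of, smul_radical_pow_mul_smul_radical_pow, hij,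
    Nat.div_self i.pos, Nat.mod_self, pow_one, pow_zero, div_eq_mul_inv, mul_smul,
    ← Algebra.algebraMap_eq_smul_one]

theorem one_mem_range_gradedEmbedding (hn : 0 < n) :
    1 ∈ LinearMap.range (gradedEmbedding M n a) := by
  refine ⟨of _ ⟨0, hn⟩ ⟨1, ?_⟩, ?_⟩
  · rw [pow_zero]
    exact FractionalIdeal.one_mem_one _
  · rw [gradedEmbedding_of]
    simp

variable [IsFractionRing A K]

theorem div_pow_mem_pow_mod (ha : a ≠ 0)
    (hMn : M ^ n = FractionalIdeal.spanSingleton A⁰ a) {k : ℕ} {z : K}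
    (hz : z ∈ (↑(M ^ k) : Submodule A K)) :
    z / a ^ (k / n) ∈ (↑(M ^ (k % n)) : Submodule A K) := by
  rw [← Nat.div_add_mod k n, pow_add, pow_mul, hMn, FractionalIdeal.spanSingleton_pow,
    FractionalIdeal.coe_mul, FractionalIdeal.coe_spanSingleton,
    Submodule.mem_span_singleton_mul] at hz
  obtain ⟨w, hw, rfl⟩ := hz
  rwa [mul_div_cancel_left₀ _ (pow_ne_zero _ ha)]

theorem mul_div_pow_mem_pow_val_add (ha : a ≠ 0)
    (hMn : M ^ n = FractionalIdeal.spanSingleton A⁰ a) (i j : Fin n) {x y : K}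
    (hx : x ∈ (↑(M ^ (i : ℕ)) : Submodule A K)) (hy : y ∈ (↑(M ^ (j : ℕ)) : Submodule A K)) :
    x * y / a ^ ((i + j : ℕ) / n) ∈ (↑(M ^ ((i + j : Fin n) : ℕ)) : Submodule A K) := by
  rw [Fin.val_add]
  exact div_pow_mem_pow_mod M ha hMn (mul_mem_pow_add M hx hy)

theorem mul_mem_range_gradedEmbedding (ha : a ≠ 0)
    (hMn : M ^ n = FractionalIdeal.spanSingleton A⁰ a) {u v : RadicalAlgebra K n a}
    (hu : u ∈ LinearMap.range (gradedEmbedding M n a))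
    (hv : v ∈ LinearMap.range (gradedEmbedding M n a)) :
    u * v ∈ LinearMap.range (gradedEmbedding M n a) := by
  obtain ⟨u, rfl⟩ := hu
  obtain ⟨v, rfl⟩ := hv
  rw [← DirectSum.sum_univ_of u, ← DirectSum.sum_univ_of v, map_sum, map_sum,
    Finset.sum_mul_sum]
  refine Submodule.sum_mem _ fun i _ => Submodule.sum_mem _ fun j _ => ?_
  exact ⟨of _ (i + j) ⟨_, mul_div_pow_mem_pow_val_add M ha hMn i j (u i).2 (v j).2⟩,
    (gradedEmbedding_of_mul_of M i j _ _ _ rfl).symm⟩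

noncomputable def gradedSubalgebra (hn : 0 < n) (ha : a ≠ 0)
    (hMn : M ^ n = FractionalIdeal.spanSingleton A⁰ a) : Subalgebra A (RadicalAlgebra K n a) :=
  (LinearMap.range (gradedEmbedding M n a)).toSubalgebra (one_mem_range_gradedEmbedding M hn)
    fun _ _ => mul_mem_range_gradedEmbedding M ha hMn

variable (hn : 0 < n) (ha : a ≠ 0) (hMn : M ^ n = FractionalIdeal.spanSingleton A⁰ a)

noncomputable def gradedEquiv :
    gradedSubalgebra M hn ha hMn ≃ₗ[A] ⨁ i : Fin n, (↑(M ^ (i : ℕ)) : Submodule A K) :=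
  ((gradedSubalgebra M hn ha hMn).toSubmoduleEquiv.symm.trans
    (LinearEquiv.ofEq _ _ (Submodule.toSubalgebra_toSubmodule _ _ _))).trans
    (LinearEquiv.ofInjective _ (gradedEmbedding_injective M hn)).symm

theorem coe_gradedEquiv_symm (x : ⨁ i : Fin n, (↑(M ^ (i : ℕ)) : Submodule A K)) :
    ((gradedEquiv M hn ha hMn).symm x : RadicalAlgebra K n a) = gradedEmbedding M n a x :=
  rfl

theorem finite_gradedSubalgebra [IsDomain A] [IsNoetherianRing A] :
    Module.Finite A (gradedSubalgebra M hn ha hMn) :=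
  have (i : Fin n) : Module.Finite A (↑(M ^ (i : ℕ)) : Submodule A K) :=
    Module.Finite.iff_fg.2 (FractionalIdeal.fg_of_isNoetherianRing le_rfl _)
  Module.Finite.equiv (gradedEquiv M hn ha hMn).symm

theorem eq_top_of_forall_degreeOne_mem (I : Ideal (gradedSubalgebra M hn ha hMn))
    (hI : ∀ (x : K) (hx : x ∈ (↑(M ^ (1 % n)) : Submodule A K)),
      (gradedEquiv M hn ha hMn).symm (of _ ⟨1 % n, Nat.mod_lt 1 hn⟩ ⟨x, hx⟩) ∈ I) :
    I = ⊤ := by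
  rw [Ideal.eq_top_iff_one]
  rcases Nat.lt_or_ge 1 n with hn2 | hn1
  · have h1n : 1 % n = 1 := Nat.mod_eq_of_lt hn2
    -- `z ∈ P` iff the degree-zero element `z / a` of `R` lies in `I`
    let P : Submodule A K := ((I.restrictScalars A).map (Subalgebra.val _).toLinearMap).comap
      ((LinearMap.toSpanSingleton K _ (algebraMap K (RadicalAlgebra K n a) a⁻¹)).restrictScalars A)
    have hle : ↑(M ^ (1 % n)) * ↑(M ^ (n - 1)) ≤ P := by
      refine Submodule.mul_le.2 fun m hm c hc => ⟨_, I.mul_mem_right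
        ((gradedEquiv M hn ha hMn).symm (of _ ⟨n - 1, by omega⟩ ⟨c, hc⟩)) (hI m hm), ?_⟩
      exact gradedEmbedding_of_mul_of_of_add_eq M (by dsimp only; omega) ⟨m, hm⟩ ⟨c, hc⟩
    have haP : a ∈ P := hle <| by
      rw [← FractionalIdeal.coe_mul, ← pow_add, h1n, Nat.add_sub_cancel' hn2.le, hMn]
      exact FractionalIdeal.mem_spanSingleton_self _ a
    obtain ⟨r, hrI, hr⟩ := haP
    have hr1 : r = 1 := Subtype.ext <| hr.trans <| by
      rw [LinearMap.restrictScalars_apply, LinearMap.toSpanSingleton_apply, Algebra.smul_def,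
        ← map_mul, mul_inv_cancel₀ ha, map_one, OneMemClass.coe_one]
    exact hr1 ▸ hrI
  · obtain rfl : n = 1 := by omega
    convert hI 1 (by simp)
    refine Subtype.ext ?_
    rw [coe_gradedEquiv_symm, gradedEmbedding_of]
    simp

end GradedModel

theorem stmt_9_general (K : Type u) [Field K] [NumberField K]
    (M : FractionalIdeal (𝓞 K)⁰ K) (n : ℕ) (hn : 0 < n)
    (a : K) (ha : a ≠ 0) (hMn : M ^ n = FractionalIdeal.spanSingleton (𝓞 K)⁰ a) :
    Nonempty (IntegralModelWitness K M n hn a) := by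
  have := finite_gradedSubalgebra M hn ha hMn
  refine ⟨{
    R := gradedSubalgebra M hn ha hMn
    integral := Algebra.IsIntegral.of_finite _ _
    equiv := gradedEquiv M hn ha hMn
    mul_of_lt := fun i j x y hx hy hij hxy => Subtype.ext <|
      gradedEmbedding_of_mul_of M i j ⟨x, hx⟩ ⟨y, hy⟩ ⟨_, hxy⟩ ?_
    mul_of_ge := fun i j x y hx hy hij hxy => Subtype.ext <|
      gradedEmbedding_of_mul_of M i j ⟨x, hx⟩ ⟨y, hy⟩ ⟨_, hxy⟩ ?_
    principal := by
      refine Eq.subst (motive := Submodule.IsPrincipal)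
        (eq_top_of_forall_degreeOne_mem M hn ha hMn _ ?_).symm inferInstance
      exact fun x hx => Submodule.subset_span ⟨x, hx, rfl⟩ }⟩
  · rw [Nat.div_eq_of_lt hij, pow_zero, div_one]
  · rw [Nat.div_eq_of_lt_le (k := 1) (by omega) (by omega), pow_one]

/-- Theorem 2.3 of the paper: if the class of the nonzero fractional ideal `M` has order
`n` in the class group, with `M^n = (a)` principal, then there is a commutative ring
`R = O_K ⊕ M ⊕ ⋯ ⊕ M^{n-1}` (multiplication induced by that of `K` and the identification
`M^n ≅ O_K` via division by `a`), integral over `O_K`, in which `M·R` is principal. -/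
theorem stmt_9 (K : Type u) [Field K] [NumberField K]
    (M : FractionalIdeal (𝓞 K)⁰ K) (hM : M ≠ 0) (n : ℕ) (hn : 0 < n)
    (horder : orderOf (ClassGroup.mk (K := K) (Units.mk0 M hM)) = n)
    (a : K) (ha : a ≠ 0) (hMn : M ^ n = FractionalIdeal.spanSingleton (𝓞 K)⁰ a) :
    Nonempty (IntegralModelWitness K M n hn a) :=
  stmt_9_general K M n hn a ha hMn
end

section
/- For every number field K there exists a finite extension L of K such that every ideal class of K becomes trivial in L; i.e., for every nonzero fractional ideal M of O_K, the extended fractional ideal M·O_L is principal. -/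
/-!
Let `h` be the class number of `K` and pick representatives `J₁, …, J_h` of the ideal classes.
Each `J_i ^ h` is principal, say `(a_i)`; adjoin to `K` an `h`-th root `β_i` of every `a_i`.
In the resulting number field `L` the extensions satisfy `(J_i O_L) ^ h = (β_i) ^ h`, and since
nonzero fractional ideals of a Dedekind domain have unique `h`-th roots (unique factorisation
into primes), `J_i O_L = (β_i)`. Every nonzero `M` is `(b) J_i` for some `i`, so `M O_L = (b β_i)`.
-/

open NumberField
open scoped nonZeroDivisors

namespace FractionalIdeal

section IsDedekindDomain

variable {A K : Type*} [CommRing A] [IsDedekindDomain A] [Field K] [Algebra A K]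
  [IsFractionRing A K]

instance : IsMulTorsionFree (FractionalIdeal A⁰ K) := by
  classical
  refine .mk' fun I hI J hJ n hn h ↦ ?_
  rw [← finprod_heightOneSpectrum_factorization' (K := K) hI,
    ← finprod_heightOneSpectrum_factorization' (K := K) hJ]
  refine finprod_congr fun v ↦ ?_
  have hc := congrArg (count K v) h
  rw [count_pow, count_pow] at hc
  rw [mul_left_cancel₀ (by exact_mod_cast hn : (n : ℤ) ≠ 0) hc]

end IsDedekindDomain

section ClassGroup

variable {R K : Type*} [CommRing R] [IsDomain R] [Field K] [Algebra R K] [IsFractionRing R K]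

theorem exists_eq_spanSingleton_mul_of_mk_eq {I J : (FractionalIdeal R⁰ K)ˣ}
    (h : ClassGroup.mk K I = ClassGroup.mk K J) :
    ∃ b : K, (I : FractionalIdeal R⁰ K) = spanSingleton R⁰ b * J := by
  have h1 : ClassGroup.mk K (I * J⁻¹) = 1 := by rw [map_mul, map_inv, h, mul_inv_cancel]
  obtain ⟨b, hb⟩ := (isPrincipal_iff _).mp (ClassGroup.mk_eq_one_iff.mp h1)
  refine ⟨b, ?_⟩
  rw [← hb, ← Units.val_mul, inv_mul_cancel_right]

theorem exists_pow_card_eq_spanSingleton [Finite (ClassGroup R)] (I : (FractionalIdeal R⁰ K)ˣ) :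
    ∃ a : K, (I : FractionalIdeal R⁰ K) ^ Nat.card (ClassGroup R) = spanSingleton R⁰ a := by
  have h1 : ClassGroup.mk K (I ^ Nat.card (ClassGroup R)) = 1 := by
    rw [map_pow, pow_card_eq_one']
  simpa using (isPrincipal_iff _).mp (ClassGroup.mk_eq_one_iff.mp h1)

variable (R K) in
theorem exists_finset_forall_eq_spanSingleton_mul [Finite (ClassGroup R)] :
    ∃ S : Finset (FractionalIdeal R⁰ K)ˣ, ∀ I : (FractionalIdeal R⁰ K)ˣ,
      ∃ J ∈ S, ∃ b : K, (I : FractionalIdeal R⁰ K) = spanSingleton R⁰ b * J := by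
  classical
  have := Fintype.ofFinite (ClassGroup R)
  choose rep hrep using fun c : ClassGroup R ↦
    ClassGroup.induction (P := fun c ↦ ∃ I, ClassGroup.mk K I = c) K (fun I ↦ ⟨I, rfl⟩) c
  refine ⟨Finset.univ.image rep, fun I ↦ ⟨rep (ClassGroup.mk K I), by simp, ?_⟩⟩
  exact exists_eq_spanSingleton_mul_of_mk_eq (hrep _).symm

end ClassGroup

section Extension

variable {A K : Type*} (L B : Type*) [CommRing A] [IsDomain A] [CommRing B] [IsDomain B]
  [Algebra A B] [Module.IsTorsionFree A B] [Field K] [Field L] [Algebra A K] [Algebra B L]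
  [IsFractionRing A K] [IsFractionRing B L] [Algebra K L] [Algebra A L] [IsScalarTower A B L]
  [IsScalarTower A K L]

theorem extendedHom_spanSingleton_eq_algebraMap (x : K) :
    extendedHom L B (spanSingleton A⁰ x) = spanSingleton B⁰ (algebraMap K L x) := by
  rw [extendedHom_spanSingleton]
  congr 1
  refine DFunLike.congr_fun (IsLocalization.ringHom_ext A⁰ (RingHom.ext fun a ↦ ?_)) x
  simp [IsFractionRing.map, ← IsScalarTower.algebraMap_apply]

set_option linter.overlappingInstances false in
theorem extendedHom_eq_spanSingleton_of_pow_eq [IsDedekindDomain B] {I : FractionalIdeal A⁰ K}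
    {a : K} {β : L} {n : ℕ} (hn : n ≠ 0) (hI : I ^ n = spanSingleton A⁰ a)
    (hβ : β ^ n = algebraMap K L a) :
    extendedHom L B I = spanSingleton B⁰ β := by
  refine pow_left_injective hn ?_
  simp only [← map_pow, hI, extendedHom_spanSingleton_eq_algebraMap, ← hβ, spanSingleton_pow]

end Extension

end FractionalIdeal

theorem exists_finiteDimensional_forall_exists_pow_eq (K : Type u) [Field K] {ι : Type*} [Finite ι]
    (a : ι → K) {n : ℕ} (hn : n ≠ 0) :
    ∃ (L : Type u) (_ : Field L) (_ : Algebra K L), FiniteDimensional K L ∧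
      ∀ i, ∃ β : L, β ^ n = algebraMap K L (a i) := by
  choose α hα using fun i ↦
    IsAlgClosed.exists_pow_nat_eq (algebraMap K (AlgebraicClosure K) (a i)) (Nat.pos_of_ne_zero hn)
  let L := IntermediateField.adjoin K (Set.range α)
  have : FiniteDimensional K L := IntermediateField.finiteDimensional_adjoin fun x _ ↦
    (Algebra.IsAlgebraic.isAlgebraic (R := K) x).isIntegral
  refine ⟨L, inferInstance, inferInstance, this, fun i ↦ ⟨⟨α i, ?_⟩, Subtype.ext (hα i)⟩⟩
  exact IntermediateField.subset_adjoin K _ ⟨i, rfl⟩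

/-- For every number field `K` there is a finite extension `L/K` in which every ideal
class of `K` becomes trivial: for every nonzero fractional ideal `M` of `K`, the
`O_L`-submodule of `L` generated by the image of `M` is principal. -/
theorem stmt_10 (K : Type u) [Field K] [NumberField K] :
    ∃ (L : Type u) (_ : Field L) (_ : Algebra K L), FiniteDimensional K L ∧
      ∀ M : FractionalIdeal (𝓞 K)⁰ K, M ≠ 0 →
        (Submodule.span (𝓞 L)
          (algebraMap K L '' ((M : Submodule (𝓞 K) K) : Set K))).IsPrincipal := by
  obtain ⟨S, hS⟩ := FractionalIdeal.exists_finset_forall_eq_spanSingleton_mul (𝓞 K) K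
  choose a ha using fun J : S ↦ FractionalIdeal.exists_pow_card_eq_spanSingleton J.1
  obtain ⟨L, _, _, _, hroot⟩ := exists_finiteDimensional_forall_exists_pow_eq K a
    (n := Nat.card (ClassGroup (𝓞 K))) Nat.card_pos.ne'
  choose β hβ using hroot
  have := NumberField.of_module_finite K L
  refine ⟨L, _, _, inferInstance, fun M hM ↦ ?_⟩
  obtain ⟨J, hJ, b, hMJ⟩ := hS (Units.mk0 M hM)
  rw [Units.val_mk0] at hMJ
  change (Submodule.span (𝓞 L) (algebraMap K L '' (M : Set K))).IsPrincipal
  rw [← FractionalIdeal.coe_extendedHom_eq_span L (𝓞 L), hMJ, map_mul,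
    FractionalIdeal.extendedHom_spanSingleton_eq_algebraMap,
    FractionalIdeal.extendedHom_eq_spanSingleton_of_pow_eq L (𝓞 L) Nat.card_pos.ne' (ha ⟨J, hJ⟩)
      (hβ ⟨J, hJ⟩), FractionalIdeal.spanSingleton_mul_spanSingleton,
    FractionalIdeal.coe_spanSingleton]
  exact ⟨_, rfl⟩
end
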